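/- Let R_1, …, R_n be a REP instance of pairwise disjoint rectangles with optimal density k, and let ρ be its number of nonempty peeling levels. Then k ≤ 2ρ (each level can escape with density at most 2, so removing a level decreases the optimal density by at most 2). -/

import Mathlib

/-- One of the four axis-aligned escape directions. -/
inductive Dir | left | right | up | down
deriving DecidableEq

instance : Fintype Dir :=
  ⟨{Dir.left, Dir.right, Dir.up, Dir.down}, fun x => by cases x <;> simp⟩

/-- A closed axis-aligned rectangle `[xmin,xmax] × [ymin,ymax]`. -/
structure Rect where
  xmin : ℝ
  xmax : ℝ
  ymin : ℝ
  ymax : ℝ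

/-- The point set of a rectangle. -/
def Rect.pts (r : Rect) : Set (ℝ × ℝ) :=
  {p | r.xmin ≤ p.1 ∧ p.1 ≤ r.xmax ∧ r.ymin ≤ p.2 ∧ p.2 ≤ r.ymax}

/-- The rectangle is a genuine (nonempty) closed rectangle. -/
def Rect.proper (r : Rect) : Prop := r.xmin ≤ r.xmax ∧ r.ymin ≤ r.ymax

/-- The boundary box `B = [0,W] × [0,H]`. -/
def boundaryBox (W H : ℝ) : Set (ℝ × ℝ) := {p | 0 ≤ p.1 ∧ p.1 ≤ W ∧ 0 ≤ p.2 ∧ p.2 ≤ H}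

/-- The rectangle is contained in the boundary box `[0,W] × [0,H]`. -/
def Rect.inB (W H : ℝ) (r : Rect) : Prop :=
  0 ≤ r.xmin ∧ r.xmax ≤ W ∧ 0 ≤ r.ymin ∧ r.ymax ≤ H

/-- The escape path of a rectangle in a given direction, inside `[0,W] × [0,H]`. -/
def Rect.escape (W H : ℝ) (r : Rect) : Dir → Set (ℝ × ℝ)
  | Dir.right => {p | r.xmin ≤ p.1 ∧ p.1 ≤ W ∧ r.ymin ≤ p.2 ∧ p.2 ≤ r.ymax}
  | Dir.left  => {p | 0 ≤ p.1 ∧ p.1 ≤ r.xmax ∧ r.ymin ≤ p.2 ∧ p.2 ≤ r.ymax}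
  | Dir.up    => {p | r.xmin ≤ p.1 ∧ p.1 ≤ r.xmax ∧ r.ymin ≤ p.2 ∧ p.2 ≤ H}
  | Dir.down  => {p | r.xmin ≤ p.1 ∧ p.1 ≤ r.xmax ∧ 0 ≤ p.2 ∧ p.2 ≤ r.ymax}

/-- Density at point `p` of the escape assignment `σ` restricted to the subfamily `S`. -/
noncomputable def density {n : ℕ} (W H : ℝ) (R : Fin n → Rect) (S : Set (Fin n))
    (σ : Fin n → Dir) (p : ℝ × ℝ) : ℕ :=
  {i | i ∈ S ∧ p ∈ (R i).escape W H (σ i)}.ncard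

/-- The optimal (minimum over assignments of the maximum over points of `B`) density of
the subfamily `S`. -/
noncomputable def optDensity {n : ℕ} (W H : ℝ) (R : Fin n → Rect) (S : Set (Fin n)) : ℕ :=
  sInf {k | ∃ σ : Fin n → Dir, ∀ p ∈ boundaryBox W H, density W H R S σ p ≤ k}

/-- `R j` blocks `R i` in direction `α`. -/
def blocks {n : ℕ} (W H : ℝ) (R : Fin n → Rect) (α : Dir) (j i : Fin n) : Prop :=
  j ≠ i ∧ ¬ Disjoint (R j).pts ((R i).escape W H α)

/-- `R i` is free in direction `α` within the subfamily `S`: no other rectangle of `S`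
blocks it in direction `α`. -/
def free {n : ℕ} (W H : ℝ) (R : Fin n → Rect) (S : Set (Fin n)) (i : Fin n) (α : Dir) : Prop :=
  ∀ j ∈ S, j ≠ i → Disjoint ((R i).escape W H α) (R j).pts

/-- `peel W H R ℓ` is the set of indices remaining after removing peeling levels `1,…,ℓ`. -/
def peel {n : ℕ} (W H : ℝ) (R : Fin n → Rect) : ℕ → Set (Fin n)
  | 0 => Set.univ
  | ℓ + 1 => {i ∈ peel W H R ℓ | ¬ ∃ α, free W H R (peel W H R ℓ) i α}

/-- The peeling level of rectangle `R i` (the least `ℓ` at which it has been removed). -/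
noncomputable def levelOf {n : ℕ} (W H : ℝ) (R : Fin n → Rect) (i : Fin n) : ℕ :=
  sInf {ℓ | i ∉ peel W H R ℓ}

/-- The number `ρ` of nonempty peeling levels. -/
noncomputable def numLevels {n : ℕ} (W H : ℝ) (R : Fin n → Rect) : ℕ :=
  sInf {ℓ | peel W H R ℓ = ∅}

/-!
Give every rectangle a direction in which it is free within the subfamily of its own level.
Two rectangles of one level whose chosen paths run along the same axis cannot have
intersecting paths: on the line through a common point, one of the two paths would run into
the other rectangle. Hence a point lies on at most one horizontal and one vertical path per
level, so this assignment has density at most `2ρ`.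
-/

def Dir.isHorizontal : Dir → Bool
  | .left | .right => true
  | .up | .down => false

lemma Rect.not_disjoint_escape_pts_or_of_mem_escape {W H : ℝ} {r s : Rect}
    (hr : r.proper) (hs : s.proper) (hrB : r.inB W H) (hsB : s.inB W H) {α β : Dir}
    (hαβ : α.isHorizontal = β.isHorizontal) {p : ℝ × ℝ} (hpr : p ∈ r.escape W H α)
    (hps : p ∈ s.escape W H β) :
    ¬Disjoint (r.escape W H α) s.pts ∨ ¬Disjoint (s.escape W H β) r.pts := by
  simp only [Set.not_disjoint_iff]
  unfold Rect.proper Rect.inB at *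
  cases α <;> cases β <;>
    simp only [Dir.isHorizontal, Bool.true_eq_false, Bool.false_eq_true] at hαβ <;>
    simp only [Rect.escape, Rect.pts, Set.mem_ofPred_eq] at *
  -- The witness lies on the line through `p` along the escape axis, on an edge of the
  -- rectangle that the other path reaches.
  · rcases le_total r.xmax s.xmax with h | h
    · exact .inr ⟨(r.xmax, p.2), by grind, by grind⟩
    · exact .inl ⟨(s.xmax, p.2), by grind, by grind⟩
  · exact .inr ⟨(max r.xmin s.xmin, p.2), by grind, by grind⟩
  · exact .inl ⟨(max r.xmin s.xmin, p.2), by grind, by grind⟩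
  · rcases le_total r.xmin s.xmin with h | h
    · exact .inl ⟨(s.xmin, p.2), by grind, by grind⟩
    · exact .inr ⟨(r.xmin, p.2), by grind, by grind⟩
  · rcases le_total r.ymin s.ymin with h | h
    · exact .inl ⟨(p.1, s.ymin), by grind, by grind⟩
    · exact .inr ⟨(p.1, r.ymin), by grind, by grind⟩
  · exact .inl ⟨(p.1, max r.ymin s.ymin), by grind, by grind⟩
  · exact .inr ⟨(p.1, max r.ymin s.ymin), by grind, by grind⟩
  · rcases le_total r.ymax s.ymax with h | h
    · exact .inr ⟨(p.1, r.ymax), by grind, by grind⟩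
    · exact .inl ⟨(p.1, s.ymax), by grind, by grind⟩

section Peeling

variable {n : ℕ} {W H : ℝ} {R : Fin n → Rect}

lemma exists_free_of_nonempty (hprop : ∀ i, (R i).proper)
    (hdisj : ∀ i j, i ≠ j → Disjoint (R i).pts (R j).pts) {S : Set (Fin n)} (hS : S.Nonempty) :
    ∃ i ∈ S, ∃ α, free W H R S i α := by
  obtain ⟨i, hiS, hmax⟩ := S.exists_max_image (fun i => (R i).xmin) S.toFinite hS
  refine ⟨i, hiS, .right, fun j hj hji => Set.disjoint_left.2 fun q hqi hqj => ?_⟩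
  obtain ⟨hq1, -, hq3, hq4⟩ := hqi
  obtain ⟨-, hq2', hq3', hq4'⟩ := hqj
  exact Set.disjoint_left.1 (hdisj i j hji.symm)
    (show ((R i).xmin, q.2) ∈ (R i).pts from ⟨le_rfl, (hprop i).1, hq3, hq4⟩)
    ⟨hmax j hj, by grind, hq3', hq4'⟩

lemma peel_succ_subset (ℓ : ℕ) : peel W H R (ℓ + 1) ⊆ peel W H R ℓ := fun _ h => h.1

lemma ncard_peel_le (hprop : ∀ i, (R i).proper)
    (hdisj : ∀ i j, i ≠ j → Disjoint (R i).pts (R j).pts) (ℓ : ℕ) :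
    (peel W H R ℓ).ncard ≤ n - ℓ := by
  induction ℓ with
  | zero => simp [peel]
  | succ ℓ ih =>
    rcases (peel W H R ℓ).eq_empty_or_nonempty with hempty | hne
    · simp [Set.subset_empty_iff.1 (hempty ▸ peel_succ_subset ℓ)]
    · obtain ⟨i, hi, hfree⟩ := exists_free_of_nonempty hprop hdisj hne
      have hssub : peel W H R (ℓ + 1) ⊂ peel W H R ℓ :=
        (peel_succ_subset ℓ).ssubset_of_not_subset fun h => (h hi).2 hfree
      have := Set.ncard_lt_ncard hssub
      omega

lemma peel_numLevels (hprop : ∀ i, (R i).proper)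
    (hdisj : ∀ i j, i ≠ j → Disjoint (R i).pts (R j).pts) :
    peel W H R (numLevels W H R) = ∅ :=
  Nat.sInf_mem (s := {ℓ | peel W H R ℓ = ∅})
    ⟨n, (Set.ncard_eq_zero (Set.toFinite _)).1 (by simpa using ncard_peel_le hprop hdisj n)⟩

lemma exists_free_in_peel {i : Fin n} {m : ℕ} (hi : i ∉ peel W H R m) :
    ∃ ℓ < m, i ∈ peel W H R ℓ ∧ ∃ α, free W H R (peel W H R ℓ) i α := by
  induction m with
  | zero => exact absurd trivial hi
  | succ m ih =>
    by_cases him : i ∈ peel W H R m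
    · exact ⟨m, m.lt_succ_self, him, by simpa [peel, him] using hi⟩
    · obtain ⟨ℓ, hℓ, hmem⟩ := ih him
      exact ⟨ℓ, hℓ.trans m.lt_succ_self, hmem⟩

end Peeling

section Density

variable {n : ℕ} {W H : ℝ} {R : Fin n → Rect}

lemma eq_of_free_of_mem_escape (hprop : ∀ i, (R i).proper) (hin : ∀ i, (R i).inB W H)
    {S : Set (Fin n)} {i j : Fin n} (hi : i ∈ S) (hj : j ∈ S) {α β : Dir}
    (hfi : free W H R S i α) (hfj : free W H R S j β) (hαβ : α.isHorizontal = β.isHorizontal)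
    {p : ℝ × ℝ} (hpi : p ∈ (R i).escape W H α) (hpj : p ∈ (R j).escape W H β) : i = j := by
  by_contra hij
  rcases Rect.not_disjoint_escape_pts_or_of_mem_escape (hprop i) (hprop j) (hin i) (hin j)
    hαβ hpi hpj with h | h
  · exact h (hfi j hj (Ne.symm hij))
  · exact h (hfj i hi hij)

lemma density_le_two_mul_of_free (hprop : ∀ i, (R i).proper) (hin : ∀ i, (R i).inB W H)
    {m : ℕ} {S : ℕ → Set (Fin n)} {ℓ : Fin n → ℕ} {σ : Fin n → Dir} (hℓ : ∀ i, ℓ i < m)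
    (hmem : ∀ i, i ∈ S (ℓ i)) (hfree : ∀ i, free W H R (S (ℓ i)) i (σ i))
    (T : Set (Fin n)) (p : ℝ × ℝ) :
    density W H R T σ p ≤ 2 * m := by
  have hinj : Set.InjOn (fun i => (ℓ i, (σ i).isHorizontal))
      {i | i ∈ T ∧ p ∈ (R i).escape W H (σ i)} := by
    intro i hi j hj hij
    obtain ⟨hℓij, hαβ⟩ := Prod.mk.inj hij
    exact eq_of_free_of_mem_escape hprop hin (hmem i) (hℓij ▸ hmem j) (hfree i)
      (hℓij ▸ hfree j) hαβ hi.2 hj.2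
  calc density W H R T σ p
      ≤ (↑(Finset.range m ×ˢ (Finset.univ : Finset Bool)) : Set (ℕ × Bool)).ncard :=
        Set.ncard_le_ncard_of_injOn _ (fun i _ => by simpa using hℓ i) hinj
    _ = 2 * m := by simp [mul_comm]

end Density

/-- For a pairwise disjoint REP instance with optimal density `k` and `ρ`
nonempty peeling levels, `k ≤ 2ρ`. -/
theorem density_le_two_levels {n : ℕ} (W H : ℝ) (R : Fin n → Rect)
    (hprop : ∀ i, (R i).proper) (hin : ∀ i, (R i).inB W H)
    (hdisj : ∀ i j, i ≠ j → Disjoint (R i).pts (R j).pts)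
    (k ρ : ℕ) (hk : k = optDensity W H R Set.univ) (hρ : ρ = numLevels W H R) :
    k ≤ 2 * ρ := by
  subst hk hρ
  have hlevel (i : Fin n) := exists_free_in_peel (i := i)
    (Set.eq_empty_iff_forall_notMem.1 (peel_numLevels (W := W) (H := H) hprop hdisj) i)
  choose ℓ hℓ hmem σ hfree using hlevel
  exact Nat.sInf_le
    ⟨σ, fun p _ => density_le_two_mul_of_free hprop hin hℓ hmem hfree Set.univ p⟩
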